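/- For smooth compactly supported functions f, g, h on ℝ², the anisotropic Ladyzhenskaya-type inequality holds: ∫_{ℝ²} |f g h| dx dy ≤ C ‖f‖_{L²} ‖g‖_{L²}^{1/2} ‖∂_x g‖_{L²}^{1/2} ‖h‖_{L²}^{1/2} ‖∂_y h‖_{L²}^{1/2}, for some absolute constant C. -/

import Mathlib

open MeasureTheory

noncomputable def pdx (f : ℝ × ℝ → ℝ) (z : ℝ × ℝ) : ℝ := fderiv ℝ f z (1, 0)
noncomputable def pdy (f : ℝ × ℝ → ℝ) (z : ℝ × ℝ) : ℝ := fderiv ℝ f z (0, 1)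
noncomputable def L2N (f : ℝ × ℝ → ℝ) : ℝ := (∫ z : ℝ × ℝ, (f z) ^ 2) ^ ((1:ℝ)/2)

/-- Cauchy–Schwarz for integrals. -/
lemma my_cs {α : Type*} [MeasurableSpace α] {μ : Measure α} (u v : α → ℝ)
    (hu : Integrable (fun a => u a ^ 2) μ) (hv : Integrable (fun a => v a ^ 2) μ)
    (huv : Integrable (fun a => u a * v a) μ) :
    ∫ a, |u a * v a| ∂μ ≤
      (∫ a, u a ^ 2 ∂μ) ^ ((1:ℝ)/2) * (∫ a, v a ^ 2 ∂μ) ^ ((1:ℝ)/2) := by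
  set A := ∫ a, u a ^ 2 ∂μ with hA
  set B := ∫ a, v a ^ 2 ∂μ with hB
  set X := ∫ a, |u a * v a| ∂μ with hX
  have hA0 : 0 ≤ A := integral_nonneg fun a => sq_nonneg _
  have hB0 : 0 ≤ B := integral_nonneg fun a => sq_nonneg _
  have hX0 : 0 ≤ X := integral_nonneg fun a => abs_nonneg _
  have habs : Integrable (fun a => |u a * v a|) μ := huv.abs
  have key : ∀ t : ℝ, 0 ≤ B * (t * t) + ((-2) * X) * t + A := by
    intro t
    have h1 : ∀ a, 0 ≤ v a ^ 2 * (t * t) + ((-2) * |u a * v a|) * t + u a ^ 2 := by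
      intro a
      have habs2 : |u a * v a| = |u a| * |v a| := abs_mul _ _
      calc (0:ℝ) ≤ (|u a| - t * |v a|) ^ 2 := sq_nonneg _
        _ = v a ^ 2 * (t * t) + (-2) * |u a * v a| * t + u a ^ 2 := by
            rw [habs2, ← sq_abs (u a), ← sq_abs (v a)]; ring
    have : 0 ≤ ∫ a, (v a ^ 2 * (t * t) + ((-2) * |u a * v a|) * t + u a ^ 2) ∂μ :=
      integral_nonneg h1
    calc (0:ℝ) ≤ _ := this
      _ = B * (t * t) + ((-2) * X) * t + A := by
          have i1 : Integrable (fun a => v a ^ 2 * (t * t)) μ := hv.mul_const _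
          have i2 : Integrable (fun a => (-2) * |u a * v a| * t) μ :=
            (habs.const_mul (-2)).mul_const t
          have i12 : Integrable (fun a => v a ^ 2 * (t * t) + (-2) * |u a * v a| * t) μ :=
            i1.add i2
          rw [integral_add i12 hu, integral_add i1 i2, integral_mul_const,
            integral_mul_const, integral_const_mul]
  have hdisc : discrim B ((-2)*X) A ≤ 0 := discrim_le_zero key
  have hsq : X ^ 2 ≤ A * B := by
    rw [discrim] at hdisc; nlinarith
  calc X = (X ^ 2) ^ ((1:ℝ)/2) := by
          rw [← Real.rpow_natCast X 2, ← Real.rpow_mul hX0]; norm_num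
    _ ≤ (A * B) ^ ((1:ℝ)/2) := Real.rpow_le_rpow (sq_nonneg _) hsq (by norm_num)
    _ = A ^ ((1:ℝ)/2) * B ^ ((1:ℝ)/2) := Real.mul_rpow hA0 hB0

/-- 1D FTC bound: `u x ^ 2 ≤ 2 ∫ |u u'|`. -/
lemma my_1d (u : ℝ → ℝ) (hu : ContDiff ℝ (⊤ : ℕ∞) u) (hc : HasCompactSupport u) (x : ℝ) :
    u x ^ 2 ≤ 2 * ∫ t, |u t * deriv u t| := by
  have hud : Differentiable ℝ u := hu.differentiable (by simp)
  have hw : ContDiff ℝ 1 (fun t => u t * u t) := (hu.mul hu).of_le (by simp)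
  have hwc : HasCompactSupport (fun t => u t * u t) := hc.mul_left
  have hderiv : ∀ t, deriv (fun s => u s * u s) t = 2 * (u t * deriv u t) := by
    intro t
    rw [deriv_fun_mul (hud t) (hud t)]; ring
  have hint : Integrable (fun t => |u t * deriv u t|) := by
    refine (Continuous.integrable_of_hasCompactSupport ?_ ?_).abs
    · exact hu.continuous.mul (hu.continuous_deriv (by simp))
    · exact hc.mul_right
  have h1 : u x ^ 2 = ∫ t in Set.Iic x, deriv (fun s => u s * u s) t := by
    rw [HasCompactSupport.integral_Iic_deriv_eq hw hwc x]; ring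
  rw [h1]
  calc ∫ t in Set.Iic x, deriv (fun s => u s * u s) t
      ≤ ∫ t in Set.Iic x, 2 * |u t * deriv u t| := by
        refine setIntegral_mono_on ?_ ?_ measurableSet_Iic ?_
        · exact ((hw.continuous_deriv le_rfl).integrable_of_hasCompactSupport
            hwc.deriv).integrableOn
        · exact (hint.const_mul 2).integrableOn
        · intro t _
          rw [hderiv t]
          calc 2 * (u t * deriv u t) ≤ |2 * (u t * deriv u t)| := le_abs_self _
            _ = 2 * |u t * deriv u t| := by rw [abs_mul]; norm_num
    _ ≤ ∫ t, 2 * |u t * deriv u t| := by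
        refine setIntegral_le_integral (hint.const_mul 2) ?_
        exact Filter.Eventually.of_forall fun t => by positivity
    _ = 2 * ∫ t, |u t * deriv u t| := integral_const_mul 2 _

lemma slice_x_contDiff (g : ℝ × ℝ → ℝ) (hg : ContDiff ℝ (⊤ : ℕ∞) g) (y : ℝ) :
    ContDiff ℝ (⊤ : ℕ∞) (fun x => g (x, y)) := hg.comp (contDiff_id.prodMk contDiff_const)

lemma slice_x_cs (g : ℝ × ℝ → ℝ) (hgc : HasCompactSupport g) (y : ℝ) :
    HasCompactSupport (fun x => g (x, y)) := by
  apply HasCompactSupport.intro (hgc.image continuous_fst)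
  intro x hx
  by_contra hne
  exact hx ⟨(x, y), subset_tsupport g hne, rfl⟩

lemma slice_x_deriv (g : ℝ × ℝ → ℝ) (hg : ContDiff ℝ (⊤ : ℕ∞) g) (y x : ℝ) :
    deriv (fun x => g (x, y)) x = pdx g (x, y) := by
  have hcurve : HasDerivAt (fun x : ℝ => (x, y)) ((1:ℝ), (0:ℝ)) x :=
    (hasDerivAt_id x).prodMk (hasDerivAt_const x y)
  exact ((hg.differentiable (by simp) (x, y)).hasFDerivAt.comp_hasDerivAt x hcurve).deriv

lemma slice_y_contDiff (h : ℝ × ℝ → ℝ) (hh : ContDiff ℝ (⊤ : ℕ∞) h) (x : ℝ) :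
    ContDiff ℝ (⊤ : ℕ∞) (fun y => h (x, y)) := hh.comp (contDiff_const.prodMk contDiff_id)

lemma slice_y_cs (h : ℝ × ℝ → ℝ) (hhc : HasCompactSupport h) (x : ℝ) :
    HasCompactSupport (fun y => h (x, y)) := by
  apply HasCompactSupport.intro (hhc.image continuous_snd)
  intro y hy
  by_contra hne
  exact hy ⟨(x, y), subset_tsupport h hne, rfl⟩

lemma slice_y_deriv (h : ℝ × ℝ → ℝ) (hh : ContDiff ℝ (⊤ : ℕ∞) h) (x y : ℝ) :
    deriv (fun y => h (x, y)) y = pdy h (x, y) := by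
  have hcurve : HasDerivAt (fun y : ℝ => (x, y)) ((0:ℝ), (1:ℝ)) y :=
    (hasDerivAt_const y x).prodMk (hasDerivAt_id y)
  exact ((hh.differentiable (by simp) (x, y)).hasFDerivAt.comp_hasDerivAt y hcurve).deriv

lemma pdx_cont (g : ℝ × ℝ → ℝ) (hg : ContDiff ℝ (⊤ : ℕ∞) g) : Continuous (pdx g) :=
  (hg.continuous_fderiv (by simp)).clm_apply continuous_const

lemma pdx_cs (g : ℝ × ℝ → ℝ) (hgc : HasCompactSupport g) :
    HasCompactSupport (pdx g) := by
  have : pdx g = (fun L : ℝ × ℝ →L[ℝ] ℝ => L (1, 0)) ∘ fderiv ℝ g := rfl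
  rw [this]
  exact (hgc.fderiv ℝ).comp_left (by simp)

lemma pdy_cont (h : ℝ × ℝ → ℝ) (hh : ContDiff ℝ (⊤ : ℕ∞) h) : Continuous (pdy h) :=
  (hh.continuous_fderiv (by simp)).clm_apply continuous_const

lemma pdy_cs (h : ℝ × ℝ → ℝ) (hhc : HasCompactSupport h) :
    HasCompactSupport (pdy h) := by
  have : pdy h = (fun L : ℝ × ℝ →L[ℝ] ℝ => L (0, 1)) ∘ fderiv ℝ h := rfl
  rw [this]
  exact (hhc.fderiv ℝ).comp_left (by simp)

lemma L2N_nonneg (f : ℝ × ℝ → ℝ) : 0 ≤ L2N f :=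
  Real.rpow_nonneg (integral_nonneg fun z => sq_nonneg _) _

theorem stmt2 :
    ∃ C > 0, ∀ f g h : ℝ × ℝ → ℝ,
      ContDiff ℝ (⊤ : ℕ∞) f → HasCompactSupport f →
      ContDiff ℝ (⊤ : ℕ∞) g → HasCompactSupport g →
      ContDiff ℝ (⊤ : ℕ∞) h → HasCompactSupport h →
      ∫ z : ℝ × ℝ, |f z * g z * h z| ≤
        C * L2N f * (L2N g) ^ ((1:ℝ)/2) * (L2N (pdx g)) ^ ((1:ℝ)/2)
          * (L2N h) ^ ((1:ℝ)/2) * (L2N (pdy h)) ^ ((1:ℝ)/2) := by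
  refine ⟨2, by norm_num, fun f g h hf hfc hg hgc hh hhc => ?_⟩
  -- abbreviations
  set Fg : ℝ × ℝ → ℝ := fun z => |g z * pdx g z| with hFg
  set Fh : ℝ × ℝ → ℝ := fun z => |h z * pdy h z| with hFh
  have cFg : Continuous Fg := (hg.continuous.mul (pdx_cont g hg)).abs
  have cFh : Continuous Fh := (hh.continuous.mul (pdy_cont h hh)).abs
  have csFg : HasCompactSupport Fg := by
    have : Fg = (fun t : ℝ => |t|) ∘ fun z => g z * pdx g z := rfl
    rw [this]; exact HasCompactSupport.comp_left hgc.mul_right abs_zero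
  have csFh : HasCompactSupport Fh := by
    have : Fh = (fun t : ℝ => |t|) ∘ fun z => h z * pdy h z := rfl
    rw [this]; exact HasCompactSupport.comp_left hhc.mul_right abs_zero
  have iFg : Integrable Fg := cFg.integrable_of_hasCompactSupport csFg
  have iFh : Integrable Fh := cFh.integrable_of_hasCompactSupport csFh
  have iFg' : Integrable Fg (volume.prod volume) := by
    rw [← Measure.volume_eq_prod]; exact iFg
  have iFh' : Integrable Fh (volume.prod volume) := by
    rw [← Measure.volume_eq_prod]; exact iFh
  set G : ℝ → ℝ := fun y => ∫ t, Fg (t, y) with hG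
  set H : ℝ → ℝ := fun x => ∫ s, Fh (x, s) with hH
  have iG : Integrable G := iFg'.integral_prod_right
  have iH : Integrable H := iFh'.integral_prod_left
  have hG0 : ∀ y, 0 ≤ G y := fun y => integral_nonneg fun t => abs_nonneg _
  have hH0 : ∀ x, 0 ≤ H x := fun x => integral_nonneg fun s => abs_nonneg _
  -- pointwise bounds
  have hgpt : ∀ z : ℝ × ℝ, g z ^ 2 ≤ 2 * G z.2 := by
    rintro ⟨x, y⟩
    have h1 := my_1d (fun x => g (x, y)) (slice_x_contDiff g hg y) (slice_x_cs g hgc y) x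
    simp only [slice_x_deriv g hg y] at h1
    exact h1
  have hhpt : ∀ z : ℝ × ℝ, h z ^ 2 ≤ 2 * H z.1 := by
    rintro ⟨x, y⟩
    have h1 := my_1d (fun y => h (x, y)) (slice_y_contDiff h hh x) (slice_y_cs h hhc x) y
    simp only [slice_y_deriv h hh x] at h1
    exact h1
  -- the square of gh is integrable etc.
  have cgh : Continuous (fun z => g z * h z) := hg.continuous.mul hh.continuous
  have csgh : HasCompactSupport (fun z => g z * h z) := hgc.mul_right
  have igh2 : Integrable (fun z => (g z * h z) ^ 2) := by
    refine Continuous.integrable_of_hasCompactSupport (cgh.pow 2) ?_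
    have : (fun z => (g z * h z) ^ 2) = (fun t : ℝ => t ^ 2) ∘ fun z => g z * h z := rfl
    rw [this]; exact HasCompactSupport.comp_left csgh (by simp)
  have if2 : Integrable (fun z : ℝ × ℝ => f z ^ 2) := by
    refine Continuous.integrable_of_hasCompactSupport (hf.continuous.pow 2) ?_
    have : (fun z : ℝ × ℝ => f z ^ 2) = (fun t : ℝ => t ^ 2) ∘ f := rfl
    rw [this]; exact HasCompactSupport.comp_left hfc (by simp)
  have ifgh : Integrable (fun z => f z * (g z * h z)) :=
    Continuous.integrable_of_hasCompactSupport
      (hf.continuous.mul cgh) hfc.mul_right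
  have ig2 : Integrable (fun z : ℝ × ℝ => g z ^ 2) := by
    refine Continuous.integrable_of_hasCompactSupport (hg.continuous.pow 2) ?_
    have : (fun z : ℝ × ℝ => g z ^ 2) = (fun t : ℝ => t ^ 2) ∘ g := rfl
    rw [this]; exact HasCompactSupport.comp_left hgc (by simp)
  have ih2 : Integrable (fun z : ℝ × ℝ => h z ^ 2) := by
    refine Continuous.integrable_of_hasCompactSupport (hh.continuous.pow 2) ?_
    have : (fun z : ℝ × ℝ => h z ^ 2) = (fun t : ℝ => t ^ 2) ∘ h := rfl
    rw [this]; exact HasCompactSupport.comp_left hhc (by simp)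
  have ipdxg2 : Integrable (fun z : ℝ × ℝ => pdx g z ^ 2) := by
    refine Continuous.integrable_of_hasCompactSupport ?_ ?_
    · exact (pdx_cont g hg).pow 2
    · have : (fun z : ℝ × ℝ => pdx g z ^ 2) = (fun t : ℝ => t ^ 2) ∘ pdx g := rfl
      rw [this]; exact HasCompactSupport.comp_left (pdx_cs g hgc) (by simp)
  have ipdyh2 : Integrable (fun z : ℝ × ℝ => pdy h z ^ 2) := by
    refine Continuous.integrable_of_hasCompactSupport ?_ ?_
    · exact (pdy_cont h hh).pow 2
    · have : (fun z : ℝ × ℝ => pdy h z ^ 2) = (fun t : ℝ => t ^ 2) ∘ pdy h := rfl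
      rw [this]; exact HasCompactSupport.comp_left (pdy_cs h hhc) (by simp)
  have igpdx : Integrable (fun z => g z * pdx g z) :=
    Continuous.integrable_of_hasCompactSupport
      (hg.continuous.mul (pdx_cont g hg)) hgc.mul_right
  have ihpdy : Integrable (fun z => h z * pdy h z) :=
    Continuous.integrable_of_hasCompactSupport
      (hh.continuous.mul (pdy_cont h hh)) hhc.mul_right
  -- the key bound on ∫ (gh)^2
  have step1 : ∫ z : ℝ × ℝ, (g z * h z) ^ 2 ≤ ∫ z : ℝ × ℝ, (2 * H z.1) * (2 * G z.2) := by
    refine integral_mono_of_nonneg (Filter.Eventually.of_forall fun z => sq_nonneg _) ?_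
      (Filter.Eventually.of_forall fun z => ?_)
    · have : Integrable (fun z : ℝ × ℝ => (2 * H z.1) * (2 * G z.2)) (volume.prod volume) :=
        (iH.const_mul 2).mul_prod (iG.const_mul 2)
      rwa [← Measure.volume_eq_prod] at this
    · show (g z * h z) ^ 2 ≤ 2 * H z.1 * (2 * G z.2)
      have e : (g z * h z) ^ 2 = g z ^ 2 * h z ^ 2 := by ring
      rw [e]
      calc g z ^ 2 * h z ^ 2 ≤ (2 * G z.2) * (2 * H z.1) :=
            mul_le_mul (hgpt z) (hhpt z) (sq_nonneg _)
              (by have := hG0 z.2; positivity)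
        _ = (2 * H z.1) * (2 * G z.2) := by ring
  have step2 : ∫ z : ℝ × ℝ, (2 * H z.1) * (2 * G z.2)
      = (∫ x, 2 * H x) * ∫ y, 2 * G y := by
    rw [Measure.volume_eq_prod]
    exact integral_prod_mul (fun x => 2 * H x) (fun y => 2 * G y)
  have step3 : ∫ x, 2 * H x = 2 * ∫ z : ℝ × ℝ, Fh z := by
    rw [integral_const_mul]
    congr 1
    have := integral_integral (f := fun x s => Fh (x, s)) iFh'
    rw [hH]
    rw [this, ← Measure.volume_eq_prod]
  have step4 : ∫ y, 2 * G y = 2 * ∫ z : ℝ × ℝ, Fg z := by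
    rw [integral_const_mul]
    congr 1
    have h1 := integral_integral_swap (f := fun t y => Fg (t, y)) iFg'
    have h2 := integral_integral (f := fun t y => Fg (t, y)) iFg'
    rw [hG, ← h1, h2, ← Measure.volume_eq_prod]
  have csg : ∫ z : ℝ × ℝ, Fg z ≤ L2N g * L2N (pdx g) :=
    my_cs g (pdx g) ig2 ipdxg2 igpdx
  have csh : ∫ z : ℝ × ℝ, Fh z ≤ L2N h * L2N (pdy h) :=
    my_cs h (pdy h) ih2 ipdyh2 ihpdy
  have hFg0 : 0 ≤ ∫ z : ℝ × ℝ, Fg z := integral_nonneg fun z => abs_nonneg _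
  have hFh0 : 0 ≤ ∫ z : ℝ × ℝ, Fh z := integral_nonneg fun z => abs_nonneg _
  have hgh2 : ∫ z : ℝ × ℝ, (g z * h z) ^ 2
      ≤ 4 * (L2N g * L2N (pdx g)) * (L2N h * L2N (pdy h)) := by
    calc ∫ z : ℝ × ℝ, (g z * h z) ^ 2 ≤ _ := step1
      _ = (2 * ∫ z : ℝ × ℝ, Fh z) * (2 * ∫ z : ℝ × ℝ, Fg z) := by
          rw [step2, step3, step4]
      _ ≤ (2 * (L2N h * L2N (pdy h))) * (2 * (L2N g * L2N (pdx g))) := by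
          refine mul_le_mul (by linarith) (by linarith) (by linarith) ?_
          have := L2N_nonneg h; have := L2N_nonneg (pdy h); positivity
      _ = 4 * (L2N g * L2N (pdx g)) * (L2N h * L2N (pdy h)) := by ring
  -- main Cauchy-Schwarz
  have main : ∫ z : ℝ × ℝ, |f z * g z * h z|
      ≤ L2N f * (∫ z : ℝ × ℝ, (g z * h z) ^ 2) ^ ((1:ℝ)/2) := by
    have := my_cs f (fun z => g z * h z) if2 igh2 ifgh
    simp only [← mul_assoc] at this
    exact this
  have hL2f := L2N_nonneg f
  have hg0 := L2N_nonneg g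
  have hdg0 := L2N_nonneg (pdx g)
  have hh0 := L2N_nonneg h
  have hdh0 := L2N_nonneg (pdy h)
  have hpow : (∫ z : ℝ × ℝ, (g z * h z) ^ 2) ^ ((1:ℝ)/2)
      ≤ 2 * (L2N g) ^ ((1:ℝ)/2) * (L2N (pdx g)) ^ ((1:ℝ)/2)
        * (L2N h) ^ ((1:ℝ)/2) * (L2N (pdy h)) ^ ((1:ℝ)/2) := by
    have h0 : (0:ℝ) ≤ ∫ z : ℝ × ℝ, (g z * h z) ^ 2 := integral_nonneg fun z => sq_nonneg _
    calc (∫ z : ℝ × ℝ, (g z * h z) ^ 2) ^ ((1:ℝ)/2)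
        ≤ (4 * (L2N g * L2N (pdx g)) * (L2N h * L2N (pdy h))) ^ ((1:ℝ)/2) :=
          Real.rpow_le_rpow h0 hgh2 (by norm_num)
      _ = 2 * (L2N g) ^ ((1:ℝ)/2) * (L2N (pdx g)) ^ ((1:ℝ)/2)
          * (L2N h) ^ ((1:ℝ)/2) * (L2N (pdy h)) ^ ((1:ℝ)/2) := by
          rw [Real.mul_rpow (by positivity) (by positivity),
            Real.mul_rpow (by positivity) (by positivity),
            Real.mul_rpow hg0 hdg0, Real.mul_rpow hh0 hdh0]
          have h4 : (4:ℝ) ^ ((1:ℝ)/2) = 2 := by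
            rw [show (4:ℝ) = 2 ^ (2:ℕ) by norm_num, ← Real.rpow_natCast 2 2,
              ← Real.rpow_mul (by norm_num)]
            norm_num
          rw [h4]; ring
  calc ∫ z : ℝ × ℝ, |f z * g z * h z|
      ≤ L2N f * (∫ z : ℝ × ℝ, (g z * h z) ^ 2) ^ ((1:ℝ)/2) := main
    _ ≤ L2N f * (2 * (L2N g) ^ ((1:ℝ)/2) * (L2N (pdx g)) ^ ((1:ℝ)/2)
        * (L2N h) ^ ((1:ℝ)/2) * (L2N (pdy h)) ^ ((1:ℝ)/2)) :=
        mul_le_mul_of_nonneg_left hpow hL2f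
    _ = 2 * L2N f * (L2N g) ^ ((1:ℝ)/2) * (L2N (pdx g)) ^ ((1:ℝ)/2)
        * (L2N h) ^ ((1:ℝ)/2) * (L2N (pdy h)) ^ ((1:ℝ)/2) := by ring
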